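/- arXiv:2602.11959 — 5 statements merged into one kernel-verified Lean document; each statement's English description precedes it below -/
import Mathlib

section
/- For any λ ∈ (0,1] and r ∈ [1, (1-λ)^{-1/λ}], the r-truncated λ-generalized Pareto distribution with CDF F(v) = 1 - ((r^λ - 1)/r · v + 1)^{-1/λ} on [0,r] is λ-regular: the map v ↦ λ·v - (1-F(v))/f(v) is non-decreasing on [0,r), where f is the density of F. -/
/-!
On `[0, r]` the tail is `1 - F v = (c v + 1)^{-1/λ}` with `c = (r^λ - 1)/r ≥ 0`, so
`(1 - F v)/f v = (λ/c)(c v + 1)` and the virtual value `λ v - (1 - F v)/f v` is the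
constant `-λ/c`. In the degenerate case `r = 1` we have `c = 0`, the density vanishes, and
with Lean's `x / 0 = 0` the virtual value is `λ v`, still non-decreasing.
-/

open Set

theorem HasDerivAt.eq_of_eqOn {𝕜 E : Type*} [NontriviallyNormedField 𝕜]
    [NormedAddCommGroup E] [NormedSpace 𝕜 E] {F G : 𝕜 → E} {f g : E} {s : Set 𝕜} {v : 𝕜}
    (hs : UniqueDiffWithinAt 𝕜 s v) (hv : v ∈ s) (hFG : EqOn F G s)
    (hF : HasDerivAt F f v) (hG : HasDerivAt G g v) : f = g :=
  hs.eq_deriv _ hF.hasDerivWithinAt (hG.hasDerivWithinAt.congr hFG (hFG hv))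

namespace GeneralizedPareto

variable (c lam : ℝ)

noncomputable def tail (v : ℝ) : ℝ := (c * v + 1) ^ (-(1 / lam))

noncomputable def density (v : ℝ) : ℝ := c / lam * (c * v + 1) ^ (-(1 / lam) - 1)

variable {c lam}

theorem hasDerivAt_one_sub_tail {v : ℝ} (hv : 0 < c * v + 1) :
    HasDerivAt (fun x => 1 - tail c lam x) (density c lam v) v := by
  have hlin : HasDerivAt (fun x => c * x + 1) c v := by
    simpa using ((hasDerivAt_id v).const_mul c).add_const 1
  have hpow := Real.hasDerivAt_rpow_const (p := -(1 / lam)) (Or.inl hv.ne')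
  refine ((hpow.comp v hlin).const_sub 1).congr_deriv ?_
  rw [density]
  ring

theorem tail_div_density {v : ℝ} (hv : 0 < c * v + 1) :
    tail c lam v / density c lam v = lam / c * (c * v + 1) := by
  have hpos : 0 < (c * v + 1) ^ (-(1 / lam)) := Real.rpow_pos_of_pos hv _
  rw [tail, density, Real.rpow_sub_one hv.ne']
  rcases eq_or_ne c 0 with rfl | hc
  · simp
  rcases eq_or_ne lam 0 with rfl | hlam
  · simp
  field_simp

theorem monotoneOn_virtualValue (hc : 0 ≤ c) (hlam : 0 ≤ lam) :
    MonotoneOn (fun v => lam * v - tail c lam v / density c lam v) (Ici 0) := by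
  intro v hv w hw hvw
  have hpos : ∀ u ∈ Ici (0 : ℝ), 0 < c * u + 1 := fun u hu =>
    by nlinarith [mul_nonneg hc (mem_Ici.mp hu)]
  simp only [tail_div_density (hpos v hv), tail_div_density (hpos w hw)]
  rcases hc.eq_or_lt with rfl | hc
  · simpa using mul_le_mul_of_nonneg_left hvw hlam
  · have hexpand : ∀ u, lam / c * (c * u + 1) = lam * u + lam / c := fun u => by
      field_simp
    simp only [hexpand]
    linarith

end GeneralizedPareto

open GeneralizedPareto in
theorem stmt4_general (lam r : ℝ) (hlam : lam ∈ Set.Ioc (0:ℝ) 1)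
    (hr1 : 1 ≤ r)
    (F f : ℝ → ℝ)
    (hF : ∀ v ∈ Set.Icc (0:ℝ) r, F v = 1 - ((r ^ lam - 1) / r * v + 1) ^ (-(1 / lam)))
    (hf : ∀ v ∈ Set.Ico (0:ℝ) r, HasDerivAt F (f v) v) :
    ∀ v ∈ Set.Ico (0:ℝ) r, ∀ w ∈ Set.Ico (0:ℝ) r, v ≤ w →
      lam * v - (1 - F v) / f v ≤ lam * w - (1 - F w) / f w := by
  set c := (r ^ lam - 1) / r
  have hr0 : 0 < r := one_pos.trans_le hr1
  have hc : 0 ≤ c := div_nonneg (by linarith [Real.one_le_rpow hr1 hlam.1.le]) hr0.le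
  have hFeq : EqOn F (fun x => 1 - tail c lam x) (Icc 0 r) := hF
  have hval : ∀ v ∈ Ico (0 : ℝ) r, 1 - F v = tail c lam v ∧ f v = density c lam v :=
    fun v hv => ⟨by rw [hFeq (Ico_subset_Icc_self hv)]; ring,
      (hf v hv).eq_of_eqOn (uniqueDiffOn_Icc hr0 v (Ico_subset_Icc_self hv))
        (Ico_subset_Icc_self hv) hFeq
        (hasDerivAt_one_sub_tail (by nlinarith [mul_nonneg hc hv.1]))⟩
  intro v hv w hw hvw
  rw [(hval v hv).1, (hval v hv).2, (hval w hw).1, (hval w hw).2]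
  exact monotoneOn_virtualValue hc hlam.1.le hv.1 hw.1 hvw

/-- for `λ ∈ (0,1]` and `r ∈ [1,(1-λ)^{-1/λ}]`, the `r`-truncated
`λ`-generalized Pareto distribution with CDF `F v = 1 - ((r^λ-1)/r·v + 1)^{-1/λ}`
on `[0,r]` is `λ`-regular: `v ↦ λ·v - (1-F v)/f v` is non-decreasing on `[0,r)`. -/
theorem stmt4 (lam r : ℝ) (hlam : lam ∈ Set.Ioc (0:ℝ) 1)
    (hr1 : 1 ≤ r) (hr2 : lam < 1 → r ≤ (1 - lam) ^ (-(1 / lam)))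
    (F f : ℝ → ℝ)
    (hF : ∀ v ∈ Set.Icc (0:ℝ) r, F v = 1 - ((r ^ lam - 1) / r * v + 1) ^ (-(1 / lam)))
    (hFhigh : ∀ v : ℝ, r < v → F v = 1)
    (hf : ∀ v ∈ Set.Ico (0:ℝ) r, HasDerivAt F (f v) v) :
    ∀ v ∈ Set.Ico (0:ℝ) r, ∀ w ∈ Set.Ico (0:ℝ) r, v ≤ w →
      lam * v - (1 - F v) / f v ≤ lam * w - (1 - F w) / f w :=
  stmt4_general lam r hlam hr1 F f hF hf
end

section
/- Beta-derivative identity: for positive integers n and t, the quantity a·S equals n·(H_{n+t} - H_n), where a = (n+t)·(n+t-1)·C(n+t-2, n-1), S = Σ_{j=0}^{t-1} C(t-1, j)·(-1)^j/(n+j+1)², and H_k denotes the k-th harmonic number. -/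
lemma sumrec (x : ℝ) (m : ℕ) :
    ∑ j ∈ Finset.range (m+2), ((m+1).choose j : ℝ) * (-1)^j / (x + j + 1)^2
      = (∑ j ∈ Finset.range (m+1), (m.choose j : ℝ) * (-1)^j / (x + j + 1)^2)
        - ∑ j ∈ Finset.range (m+1), (m.choose j : ℝ) * (-1)^j / ((x+1) + j + 1)^2 := by
  rw [Finset.sum_range_succ' (fun j => ((m+1).choose j : ℝ) * (-1)^j / (x + j + 1)^2) (m+1)]
  have hsplit : ∀ j ∈ Finset.range (m+1),
      (((m+1).choose (j+1) : ℝ)) * (-1)^(j+1) / (x + (j+1) + 1)^2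
        = (m.choose j : ℝ) * (-1)^(j+1) / (x + (j+1) + 1)^2
          + (m.choose (j+1) : ℝ) * (-1)^(j+1) / (x + (j+1) + 1)^2 := by
    intro j _
    rw [Nat.choose_succ_succ]
    push_cast
    ring
  push_cast
  rw [Finset.sum_congr rfl hsplit, Finset.sum_add_distrib]
  have e1 : ∑ j ∈ Finset.range (m+1), (m.choose j : ℝ) * (-1)^(j+1) / (x + (j+1) + 1)^2
      = - ∑ j ∈ Finset.range (m+1), (m.choose j : ℝ) * (-1)^j / ((x+1) + j + 1)^2 := by
    rw [← Finset.sum_neg_distrib]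
    refine Finset.sum_congr rfl fun j _ => ?_
    ring
  have e2 : (∑ j ∈ Finset.range (m+1), (m.choose (j+1) : ℝ) * (-1)^(j+1) / (x + (j+1) + 1)^2)
        + ((m+1).choose 0 : ℝ) * (-1)^0 / (x + (0:ℕ) + 1)^2
      = ∑ j ∈ Finset.range (m+1), (m.choose j : ℝ) * (-1)^j / (x + j + 1)^2 := by
    have := Finset.sum_range_succ' (fun j => (m.choose j : ℝ) * (-1)^j / (x + j + 1)^2) (m+1)
    have h0 : ∑ j ∈ Finset.range (m+2), (m.choose j : ℝ) * (-1)^j / (x + j + 1)^2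
        = ∑ j ∈ Finset.range (m+1), (m.choose j : ℝ) * (-1)^j / (x + j + 1)^2 := by
      rw [Finset.sum_range_succ]
      simp [Nat.choose_succ_self]
    rw [h0] at this
    simp only [Nat.choose_zero_right, Nat.cast_one, Nat.cast_zero] at this ⊢
    push_cast at this ⊢
    linarith [this]
  push_cast at e1 e2 ⊢
  linarith [e1, e2]

lemma ratio1 (n m : ℕ) : (m+2) * (n+m+3).choose (n+1) = (n+m+3) * (n+m+2).choose (n+1) := by
  have h := Nat.add_one_mul_choose_eq (n+m+2) (m+1)
  simp only [Nat.succ_eq_add_one, show n+m+2+1 = n+m+3 from rfl, show m+1+1 = m+2 from rfl] at h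
  have s1 : (n+m+2).choose (m+1) = (n+m+2).choose (n+1) := by
    rw [show n+m+2 = (n+1)+(m+1) by ring, Nat.choose_symm_add]
  have s2 : (n+m+3).choose (m+2) = (n+m+3).choose (n+1) := by
    rw [show n+m+3 = (n+1)+(m+2) by ring, Nat.choose_symm_add]
  rw [s1, s2] at h
  rw [mul_comm, h, mul_comm]

lemma ratio2 (n m : ℕ) : (n+2) * (n+m+3).choose (n+2) = (n+m+3) * (n+m+2).choose (n+1) := by
  have h := Nat.add_one_mul_choose_eq (n+m+2) (n+1)
  simp only [Nat.succ_eq_add_one, show n+m+2+1 = n+m+3 from rfl, show n+1+1 = n+2 from rfl] at h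
  rw [mul_comm, h, mul_comm]

lemma key : ∀ m n : ℕ,
    (((n+1) * (m+1) * ((n+m+2).choose (n+1)) : ℕ) : ℝ)
        * (∑ j ∈ Finset.range (m+1), (m.choose j : ℝ) * (-1)^j / (((n:ℝ)+1) + j + 1)^2)
      = ((n:ℝ)+1) * ((∑ i ∈ Finset.range (n+m+2), (1:ℝ)/(i+1))
          - ∑ i ∈ Finset.range (n+1), (1:ℝ)/(i+1)) := by
  intro m
  induction m with
  | zero =>
    intro n
    have hH : ∑ i ∈ Finset.range (n+0+2), (1:ℝ)/(i+1)
        = (∑ i ∈ Finset.range (n+1), (1:ℝ)/(i+1)) + 1/((n:ℝ)+1+1) := by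
      rw [show n+0+2 = (n+1)+1 from rfl, Finset.sum_range_succ]
      push_cast
      ring
    rw [hH, show (0:ℕ)+1 = 1 from rfl, Finset.sum_range_one,
      show n+0+2 = n+2 from rfl, show n+2 = (n+1)+1 from rfl, Nat.choose_succ_self_right]
    simp only [Nat.choose_zero_right]
    push_cast
    have h1 : ((n:ℝ)+1+0+1) ≠ 0 := by positivity
    have h2 : ((n:ℝ)+1+1) ≠ 0 := by positivity
    field_simp
    ring
  | succ m ih =>
    intro n
    rw [show m+1+1 = m+2 from rfl, show n+(m+1)+2 = n+m+3 by omega]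
    rw [sumrec ((n:ℝ)+1) m]
    have hH : ∑ i ∈ Finset.range (n+m+3), (1:ℝ)/(i+1)
        = (∑ i ∈ Finset.range (n+m+2), (1:ℝ)/(i+1)) + 1/((n:ℝ)+(m:ℝ)+2+1) := by
      rw [show n+m+3 = (n+m+2)+1 from rfl, Finset.sum_range_succ]
      push_cast
      ring
    have hB : ∑ i ∈ Finset.range (n+2), (1:ℝ)/(i+1)
        = (∑ i ∈ Finset.range (n+1), (1:ℝ)/(i+1)) + 1/((n:ℝ)+1+1) := by
      rw [show n+2 = (n+1)+1 from rfl, Finset.sum_range_succ]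
      push_cast
      ring
    rw [hH]
    have IH1 := ih n
    have IH2 := ih (n+1)
    rw [show n+1+m+2 = n+m+3 by omega, show n+1+1 = n+2 from rfl, hH, hB] at IH2
    have R1c : ((m:ℝ)+2) * ((n+m+3).choose (n+1) : ℝ)
        = ((n:ℝ)+(m:ℝ)+3) * ((n+m+2).choose (n+1) : ℝ) := by
      exact_mod_cast congrArg (Nat.cast : ℕ → ℝ) (ratio1 n m)
    have R2c : ((n:ℝ)+2) * ((n+m+3).choose (n+2) : ℝ)
        = ((n:ℝ)+(m:ℝ)+3) * ((n+m+2).choose (n+1) : ℝ) := by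
      exact_mod_cast congrArg (Nat.cast : ℕ → ℝ) (ratio2 n m)
    have hm : ((m:ℝ)+1) ≠ 0 := by positivity
    apply mul_left_cancel₀ hm
    push_cast at IH1 IH2 ⊢
    have hu : ((n:ℝ)+(m:ℝ)+3) * ((1:ℝ)/((n:ℝ)+(m:ℝ)+2+1)) = 1 := by
      rw [mul_one_div, div_eq_one_iff_eq] <;> [ring; positivity]
    have hv : ((n:ℝ)+2) * ((1:ℝ)/((n:ℝ)+1+1)) = 1 := by
      rw [mul_one_div, div_eq_one_iff_eq] <;> [ring; positivity]
    set S1 := ∑ j ∈ Finset.range (m+1), (m.choose j : ℝ) * (-1)^j / (((n:ℝ)+1) + j + 1)^2 with hS1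
    set S2 := ∑ j ∈ Finset.range (m+1), (m.choose j : ℝ) * (-1)^j / ((((n:ℝ)+1)+1) + j + 1)^2 with hS2
    linear_combination ((n:ℝ)+1)*((m:ℝ)+1)*(S1-S2)*R1c + ((n:ℝ)+(m:ℝ)+3)*IH1 - ((n:ℝ)+1)*IH2
      + ((n:ℝ)+1)*((m:ℝ)+1)*S2*R2c - ((n:ℝ)+1)*hu + ((n:ℝ)+1)*hv

lemma coefeq (k m : ℕ) : (k+m+2)*(k+m+1)*(k+m).choose k = (k+1)*(m+1)*((k+m+2).choose (k+1)) := by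
  have h1 := Nat.add_one_mul_choose_eq (k+m) k
  have h2 := Nat.add_one_mul_choose_eq (k+m+1) m
  simp only [Nat.succ_eq_add_one, show k+m+1+1 = k+m+2 from rfl] at h1 h2
  have s1 : (k+m+1).choose (k+1) = (k+m+1).choose m := by
    rw [show k+m+1 = m+(k+1) by ring, Nat.choose_symm_add]
  have s2 : (k+m+2).choose (m+1) = (k+m+2).choose (k+1) := by
    rw [show k+m+2 = (k+1)+(m+1) by ring, Nat.choose_symm_add]
  calc (k+m+2)*(k+m+1)*(k+m).choose k = (k+m+2)*((k+m+1)*(k+m).choose k) := by ring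
    _ = (k+m+2)*((k+m+1).choose (k+1) * (k+1)) := by rw [h1]
    _ = (k+1)*((k+m+2)*(k+m+1).choose m) := by rw [s1]; ring
    _ = (k+1)*((k+m+2).choose (m+1) * (m+1)) := by rw [h2]
    _ = (k+1)*(m+1)*((k+m+2).choose (k+1)) := by rw [s2]; ring

/-- Beta-derivative identity: for positive integers `n, t`,
`a·S = n·(H_{n+t} - H_n)` where `a = (n+t)(n+t-1)·C(n+t-2,n-1)` and
`S = Σ_{j=0}^{t-1} C(t-1,j)·(-1)^j/(n+j+1)²`. -/
theorem stmt8 (n t : ℕ) (hn : 1 ≤ n) (ht : 1 ≤ t) :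
    (((n + t) * (n + t - 1) * Nat.choose (n + t - 2) (n - 1) : ℕ) : ℝ) *
        (∑ j ∈ Finset.range t, ((t - 1).choose j : ℝ) * (-1) ^ j / ((n : ℝ) + j + 1) ^ 2)
      = (n : ℝ) * ((∑ i ∈ Finset.range (n + t), (1 : ℝ) / (i + 1)) -
          ∑ i ∈ Finset.range n, (1 : ℝ) / (i + 1)) := by
  obtain ⟨k, rfl⟩ := Nat.exists_eq_add_of_le hn
  obtain ⟨m, rfl⟩ := Nat.exists_eq_add_of_le ht
  simp only [show 1+k = k+1 by omega, show 1+m = m+1 by omega]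
  simp only [show k+1+(m+1) = k+m+2 by omega, show k+m+2-1 = k+m+1 by omega,
    show k+m+2-2 = k+m by omega, show k+1-1 = k by omega, show m+1-1 = m by omega]
  rw [coefeq k m]
  have h := key m k
  push_cast at h ⊢
  exact h
end

section
/- For every integer n ≥ 594, with t_n = ⌈(e^{1/e} - 1)·n + 1.05·ln n⌉, the inequality t_n ≥ (n+1)·(exp((1 + 8/n)/(e·(1 - e^{-√n}))) - 1) holds. -/
/-! With `ε = e^{-√n} ≤ 24 / n²`, the exponent `(1 + 8/n) / (e (1 - ε))` exceeds `1/e` by at most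
`q = 3.3 / n`, so by `e^q ≤ 1 / (1 - q)` the left-hand side is at most
`(n + 1) (e^{1/e} / (1 - q) - 1)`. Since `e^{1/e} < 1.6`, this is at most `(e^{1/e} - 1) n + 6`,
and `6 ≤ ln n` once `n ≥ e^6 ≈ 403`. -/

open Real

namespace Real

lemma exp_neg_sqrt_le {x : ℝ} (hx : 0 < x) : exp (-√x) ≤ 24 / x ^ 2 := by
  have h : x ^ 2 / 24 ≤ exp √x := by
    have h4 : √x ^ 4 = x ^ 2 := by rw [show 4 = 2 * 2 from rfl, pow_mul, sq_sqrt hx.le]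
    simpa [Nat.factorial, h4] using pow_div_factorial_le_exp √x (sqrt_nonneg x) 4
  rw [exp_neg, inv_le_comm₀ (exp_pos _) (by positivity)]
  simpa using h

lemma exp_inv_exp_one_lt : exp (1 / exp 1) < 1.6 := by
  have he := exp_one_gt_d9
  have hinv : 1 / exp 1 < 0.368 := by
    rw [div_lt_iff₀ (exp_pos 1)]; linarith
  calc exp (1 / exp 1) ≤ 1 / (1 - 1 / exp 1) :=
        exp_bound_div_one_sub_of_interval (by positivity) (by linarith)
    _ < 1.6 := by rw [div_lt_iff₀ (by linarith)]; linarith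

lemma six_le_log {x : ℝ} (hx : 594 ≤ x) : 6 ≤ log x := by
  rw [le_log_iff_exp_le (by linarith)]
  calc exp 6 = exp 1 ^ 6 := by rw [← exp_nat_mul]; norm_num
    _ ≤ 2.7182818286 ^ 6 := pow_le_pow_left₀ (exp_pos 1).le exp_one_lt_d9.le 6
    _ ≤ x := by norm_num; linarith

end Real

lemma div_exp_one_mul_one_sub_le {n ε : ℝ} (hn : 0 < n) (hε : 0 ≤ ε) (hεn : ε * (n + 9) ≤ 1 / 2) :
    (1 + 8 / n) / (exp 1 * (1 - ε)) ≤ 1 / exp 1 + 3.3 / n := by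
  have he := exp_one_gt_d9
  have he' := exp_one_lt_d9
  have hε1 : ε < 1 := by nlinarith
  rw [div_le_iff₀ (mul_pos (exp_pos 1) (by linarith))]
  field_simp
  nlinarith [mul_nonneg hε hn.le]

lemma mul_div_one_sub_sub_one_le {n c E K : ℝ} (hn : 0 < n) (hcn : c / n < 1)
    (h : (E - 1) * (1 + c) + c + c / n * (1 + K) ≤ K) :
    (n + 1) * (E / (1 - c / n) - 1) ≤ (E - 1) * n + K := by
  have hq : 0 < 1 - c / n := by linarith
  have hcn' : c / n * n = c := div_mul_cancel₀ c hn.ne'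
  rw [div_sub_one hq.ne', mul_div_assoc', div_le_iff₀ hq]
  linear_combination E * hcn' + h

/-- for `n ≥ 594` and `t_n = ⌈(e^{1/e}-1)·n + 1.05·ln n⌉`,
`t_n ≥ (n+1)·(exp((1 + 8/n)/(e·(1 - e^{-√n}))) - 1)`. -/
theorem stmt11 (n : ℕ) (hn : 594 ≤ n) :
    ((n : ℝ) + 1) *
        (Real.exp ((1 + 8 / (n : ℝ)) /
          (Real.exp 1 * (1 - Real.exp (-Real.sqrt (n : ℝ))))) - 1)
      ≤ (⌈(Real.exp (1 / Real.exp 1) - 1) * (n : ℝ) + 1.05 * Real.log (n : ℝ)⌉₊ : ℝ) := by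
  have hN : (594 : ℝ) ≤ n := by exact_mod_cast hn
  have hN0 : (0 : ℝ) < n := by linarith
  have hq : 3.3 / (n : ℝ) ≤ 0.006 := by rw [div_le_iff₀ hN0]; linarith
  have hε : exp (-√(n : ℝ)) * (n + 9) ≤ 1 / 2 := by
    have := exp_neg_sqrt_le hN0
    calc exp (-√(n : ℝ)) * (n + 9) ≤ 24 / (n : ℝ) ^ 2 * (n + 9) := by gcongr
      _ ≤ 1 / 2 := by rw [div_mul_eq_mul_div, div_le_iff₀ (by positivity)]; nlinarith
  have hexp : exp ((1 + 8 / (n : ℝ)) / (exp 1 * (1 - exp (-√(n : ℝ))))) ≤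
      exp (1 / exp 1) / (1 - 3.3 / n) := by
    calc _ ≤ exp (1 / exp 1 + 3.3 / n) :=
          exp_le_exp.mpr (div_exp_one_mul_one_sub_le hN0 (exp_pos _).le hε)
      _ ≤ exp (1 / exp 1) * (1 / (1 - 3.3 / n)) := by
          rw [exp_add]
          gcongr
          exact exp_bound_div_one_sub_of_interval (by positivity) (by linarith)
      _ = _ := by rw [mul_one_div]
  have hE := exp_inv_exp_one_lt
  have hE1 : 1 ≤ exp (1 / exp 1) := one_le_exp (by positivity)
  calc _ ≤ ((n : ℝ) + 1) * (exp (1 / exp 1) / (1 - 3.3 / n) - 1) := by gcongr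
    _ ≤ (exp (1 / exp 1) - 1) * n + 6 :=
        mul_div_one_sub_sub_one_le hN0 (by linarith) (by nlinarith)
    _ ≤ (exp (1 / exp 1) - 1) * n + 1.05 * log n := by linarith [six_le_log hN]
    _ ≤ _ := Nat.le_ceil _
end

section
/- Lower bound on competition complexity under MHR: for every integer n ≥ 1 and nonnegative integer k, if e·n·ln((n+k)/n) ≥ n then k ≥ (e^{1/e} - 1)·n. Consequently, any integer k satisfying (n+k)·R(n/(n+k)) ≥ n for the revenue curve R(q) = (e·q·ln(1/q) for q ≥ 1/e; e·q for q < 1/e) must satisfy k ≥ (e^{1/e}-1)·n. -/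
/-- lower bound on competition complexity under MHR: for `n ≥ 1` and
`k ≥ 0`, if `e·n·ln((n+k)/n) ≥ n` then `k ≥ (e^{1/e}-1)·n`; consequently any `k` with
`(n+k)·R(n/(n+k)) ≥ n`, for the revenue curve `R` of the `e`-truncated exponential
distribution, satisfies `k ≥ (e^{1/e}-1)·n`. -/
theorem stmt14 (n k : ℕ) (hn : 1 ≤ n)
    (R : ℝ → ℝ)
    (hR : ∀ q : ℝ, R q =
      if q < 1 / Real.exp 1 then Real.exp 1 * q else Real.exp 1 * q * Real.log (1 / q)) :
    ((n : ℝ) ≤ Real.exp 1 * n * Real.log (((n : ℝ) + k) / n) →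
        (Real.exp (1 / Real.exp 1) - 1) * n ≤ (k : ℝ)) ∧
      ((n : ℝ) ≤ ((n : ℝ) + k) * R ((n : ℝ) / ((n : ℝ) + k)) →
        (Real.exp (1 / Real.exp 1) - 1) * n ≤ (k : ℝ)) := by
  have hN : (1 : ℝ) ≤ (n : ℝ) := by exact_mod_cast hn
  have hN0 : (0 : ℝ) < (n : ℝ) := by linarith
  have hK0 : (0 : ℝ) ≤ (k : ℝ) := Nat.cast_nonneg k
  have hNK : (0 : ℝ) < (n : ℝ) + k := by linarith
  have he : (0 : ℝ) < Real.exp 1 := Real.exp_pos 1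
  have h1 : ((n : ℝ) ≤ Real.exp 1 * n * Real.log (((n : ℝ) + k) / n) →
      (Real.exp (1 / Real.exp 1) - 1) * n ≤ (k : ℝ)) := by
    intro h
    have hlog : 1 / Real.exp 1 ≤ Real.log (((n : ℝ) + k) / n) := by
      rw [div_le_iff₀ he]
      nlinarith [Real.log_nonneg (by rw [le_div_iff₀ hN0]; linarith : (1:ℝ) ≤ ((n:ℝ)+k)/n)]
    have hx : Real.exp (1 / Real.exp 1) ≤ ((n : ℝ) + k) / n := by
      calc Real.exp (1 / Real.exp 1) ≤ Real.exp (Real.log (((n : ℝ) + k) / n)) :=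
            Real.exp_le_exp.mpr hlog
        _ = ((n : ℝ) + k) / n := Real.exp_log (by positivity)
    rw [le_div_iff₀ hN0] at hx
    nlinarith
  refine ⟨h1, ?_⟩
  intro h
  rw [hR] at h
  by_cases hc : (n : ℝ) / ((n : ℝ) + k) < 1 / Real.exp 1
  · rw [if_pos hc] at h
    have hek : Real.exp 1 * n < (n : ℝ) + k := by
      rw [div_lt_div_iff₀ hNK he] at hc
      linarith
    have he1 : Real.exp (1 / Real.exp 1) ≤ Real.exp 1 :=
      Real.exp_le_exp.mpr (by rw [div_le_one he]; exact Real.one_le_exp zero_le_one)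
    nlinarith
  · rw [if_neg hc] at h
    apply h1
    have hq : ((n : ℝ) + k) * ((n : ℝ) / ((n : ℝ) + k)) = (n : ℝ) := by
      field_simp
    have hl : Real.log (1 / ((n : ℝ) / ((n : ℝ) + k))) = Real.log (((n : ℝ) + k) / n) := by
      rw [one_div_div]
    calc (n : ℝ) ≤ ((n : ℝ) + k) * (Real.exp 1 * ((n : ℝ) / ((n : ℝ) + k)) *
          Real.log (1 / ((n : ℝ) / ((n : ℝ) + k)))) := h
      _ = Real.exp 1 * n * Real.log (((n : ℝ) + k) / n) := by
          rw [hl]; field_simp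
end

section
/- Alternating-sum positivity with exponential weights: for integers n ≥ 594 and t = ⌈(e^{1/e}-1)·n + 1.05·ln n⌉, the sum Σ_{j=0}^{t-1} C(t-1,j)·(-1)^j·(1 - e^{-(n+j+1)})/(n+j+1)² is at least (1 - e^{-√n})·Σ_{j=0}^{t-1} C(t-1,j)·(-1)^j/(n+j+1)². -/
/-!
Since `1 / (k + 1) ^ 2 = ∫∫_{[0,1]²} (xy)^k`, with `m = t - 1` both alternating sums are
`S r = ∫∫_{[0,1]²} (xy)^n (1 - r xy)^m` at `r = 1` and `r = e⁻¹`, and the claim becomes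
`e^{-(n+1)} S(e⁻¹) ≤ e^{-√n} S(1)`. Trivially `S(e⁻¹) ≤ 1 / (n + 1) ^ 2`, while restricting
to the square `[0, √c]²` gives `S(1) ≥ (1 - c)^m c^(n+1) / (n + 1) ^ 2`. With `c = 0.69`
(close to the optimal `e^{-1/e}`) and `m ≤ 0.44491 n + 1.05 log n` the claim reduces to
an inequality between exponents that holds for `n ≥ 594`.
-/

open Real Finset intervalIntegral

theorem mul_mem_Icc_sq {b x y : ℝ} (hb : 0 ≤ b) (hx : x ∈ Set.Icc 0 b) (hy : y ∈ Set.Icc 0 b) :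
    x * y ∈ Set.Icc 0 (b ^ 2) :=
  ⟨mul_nonneg hx.1 hy.1, by rw [sq]; exact mul_le_mul hx.2 hy.2 hy.1 hb⟩

noncomputable def squareMulIntegral (b : ℝ) (f : ℝ → ℝ) : ℝ :=
  ∫ y in (0:ℝ)..b, ∫ x in (0:ℝ)..b, f (x * y)

namespace squareMulIntegral

variable {f g : ℝ → ℝ} {b : ℝ}

theorem continuous_inner (hf : Continuous f) (b : ℝ) :
    Continuous fun y => ∫ x in (0:ℝ)..b, f (x * y) :=
  continuous_parametric_intervalIntegral_of_continuous' (by fun_prop) _ _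

theorem mono (hb : 0 ≤ b) (hf : Continuous f) (hg : Continuous g)
    (hfg : ∀ u ∈ Set.Icc 0 (b ^ 2), f u ≤ g u) :
    squareMulIntegral b f ≤ squareMulIntegral b g :=
  integral_mono_on hb ((continuous_inner hf b).intervalIntegrable _ _)
    ((continuous_inner hg b).intervalIntegrable _ _) fun y hy =>
    integral_mono_on hb ((hf.comp (by fun_prop)).intervalIntegrable _ _)
      ((hg.comp (by fun_prop)).intervalIntegrable _ _) fun x hx =>
      hfg _ (mul_mem_Icc_sq hb hx hy)

theorem mono_right {b' : ℝ} (hb : 0 ≤ b) (hbb' : b ≤ b') (hf : Continuous f)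
    (hf0 : ∀ u ∈ Set.Icc 0 (b' ^ 2), 0 ≤ f u) :
    squareMulIntegral b f ≤ squareMulIntegral b' f := by
  have hb' := hb.trans hbb'
  have inner_nonneg : ∀ y ∈ Set.Icc 0 b', ∀ x ∈ Set.Ioc 0 b', 0 ≤ f (x * y) := fun y hy x hx =>
    hf0 _ (mul_mem_Icc_sq hb' (Set.Ioc_subset_Icc_self hx) hy)
  calc squareMulIntegral b f ≤ ∫ y in (0:ℝ)..b, ∫ x in (0:ℝ)..b', f (x * y) :=
        integral_mono_on hb ((continuous_inner hf b).intervalIntegrable _ _)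
          ((continuous_inner hf b').intervalIntegrable _ _) fun y hy =>
          integral_mono_interval le_rfl hb hbb'
            (MeasureTheory.ae_restrict_of_forall_mem measurableSet_Ioc
              (inner_nonneg y ⟨hy.1, hy.2.trans hbb'⟩))
            ((hf.comp (by fun_prop)).intervalIntegrable _ _)
    _ ≤ squareMulIntegral b' f :=
        integral_mono_interval le_rfl hb hbb'
          (MeasureTheory.ae_restrict_of_forall_mem measurableSet_Ioc fun y hy =>
            integral_nonneg hb' fun x hx =>
              hf0 _ (mul_mem_Icc_sq hb' hx (Set.Ioc_subset_Icc_self hy)))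
          ((continuous_inner hf b').intervalIntegrable _ _)

theorem sum_mul_pow (s : Finset ℕ) (c : ℕ → ℝ) (k : ℕ → ℕ) (b : ℝ) :
    squareMulIntegral b (fun u => ∑ i ∈ s, c i * u ^ k i)
      = ∑ i ∈ s, c i * (b ^ (k i + 1) / (k i + 1)) ^ 2 := by
  have inner (y : ℝ) : ∫ x in (0:ℝ)..b, ∑ i ∈ s, c i * (x * y) ^ k i
      = ∑ i ∈ s, (c i * (b ^ (k i + 1) / (k i + 1))) * y ^ k i := by
    rw [integral_finsetSum fun i _ => (by fun_prop : Continuous _).intervalIntegrable _ _]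
    refine sum_congr rfl fun i _ => ?_
    simp_rw [mul_pow, ← mul_assoc, mul_right_comm _ _ (y ^ k i), integral_const_mul,
      integral_pow, zero_pow (Nat.succ_ne_zero _), sub_zero]
  simp_rw [squareMulIntegral, inner]
  rw [integral_finsetSum fun i _ => (by fun_prop : Continuous _).intervalIntegrable _ _]
  simp_rw [integral_const_mul, integral_pow, zero_pow (Nat.succ_ne_zero _), sub_zero]
  exact sum_congr rfl fun i _ => by ring

theorem const_mul_pow (a : ℝ) (k : ℕ) (b : ℝ) :
    squareMulIntegral b (fun u => a * u ^ k) = a * (b ^ (k + 1) / (k + 1)) ^ 2 := by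
  simpa using sum_mul_pow {k} (fun _ => a) id b

end squareMulIntegral

theorem sum_choose_mul_neg_pow_div_sq_eq (n m : ℕ) (r : ℝ) :
    ∑ j ∈ range (m + 1), (m.choose j : ℝ) * (-r) ^ j / ((n : ℝ) + j + 1) ^ 2
      = squareMulIntegral 1 (fun u => u ^ n * (1 - r * u) ^ m) := by
  have hexpand (u : ℝ) : u ^ n * (1 - r * u) ^ m
      = ∑ j ∈ range (m + 1), (m.choose j : ℝ) * (-r) ^ j * u ^ (n + j) := by
    rw [sub_eq_neg_add, neg_mul_eq_neg_mul, add_pow, mul_sum]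
    refine sum_congr rfl fun j _ => ?_
    rw [mul_pow, one_pow, pow_add]
    ring
  simp_rw [hexpand, squareMulIntegral.sum_mul_pow]
  refine sum_congr rfl fun j _ => ?_
  push_cast
  rw [one_pow, div_pow, one_pow]
  ring

theorem squareMulIntegral_pow_mul_one_sub_pow_le (n m : ℕ) {r : ℝ} (hr0 : 0 ≤ r) (hr1 : r ≤ 1) :
    squareMulIntegral 1 (fun u => u ^ n * (1 - r * u) ^ m) ≤ 1 / ((n : ℝ) + 1) ^ 2 := by
  calc squareMulIntegral 1 (fun u => u ^ n * (1 - r * u) ^ m)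
      ≤ squareMulIntegral 1 (fun u => 1 * u ^ n) :=
        squareMulIntegral.mono zero_le_one (by fun_prop) (by fun_prop) fun u hu => by
          rw [one_pow] at hu
          have h0 : 0 ≤ 1 - r * u := by nlinarith [hu.1, hu.2]
          have h1 : 1 - r * u ≤ 1 := by nlinarith [hu.1]
          rw [one_mul]
          exact mul_le_of_le_one_right (pow_nonneg hu.1 n) (pow_le_one₀ h0 h1)
    _ = 1 / ((n : ℝ) + 1) ^ 2 := by
        rw [squareMulIntegral.const_mul_pow, one_pow, div_pow, one_pow, one_mul]

theorem le_squareMulIntegral_pow_mul_one_sub_pow (n m : ℕ) {c : ℝ} (hc0 : 0 ≤ c) (hc1 : c ≤ 1) :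
    (1 - c) ^ m * c ^ (n + 1) / ((n : ℝ) + 1) ^ 2
      ≤ squareMulIntegral 1 (fun u => u ^ n * (1 - u) ^ m) := by
  have hb : √c ^ 2 = c := sq_sqrt hc0
  calc (1 - c) ^ m * c ^ (n + 1) / ((n : ℝ) + 1) ^ 2
      = squareMulIntegral √c (fun u => (1 - c) ^ m * u ^ n) := by
        rw [squareMulIntegral.const_mul_pow, div_pow, ← pow_mul, mul_comm (n + 1), pow_mul, hb]
        ring
    _ ≤ squareMulIntegral √c (fun u => u ^ n * (1 - u) ^ m) :=
        squareMulIntegral.mono (sqrt_nonneg c) (by fun_prop) (by fun_prop) fun u hu => by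
          rw [hb] at hu
          rw [mul_comm]
          exact mul_le_mul_of_nonneg_left
            (pow_le_pow_left₀ (by linarith [hu.2]) (by linarith [hu.2]) m) (pow_nonneg hu.1 n)
    _ ≤ squareMulIntegral 1 (fun u => u ^ n * (1 - u) ^ m) :=
        squareMulIntegral.mono_right (sqrt_nonneg c) (sqrt_le_one.mpr hc1) (by fun_prop)
          fun u hu => by
            rw [one_pow] at hu
            exact mul_nonneg (pow_nonneg hu.1 n) (pow_nonneg (by linarith [hu.2]) m)

theorem exp_inv_exp_one_le : exp (1 / exp 1) ≤ 1.44491 := by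
  have hinv : 1 / exp 1 ≤ 0.368 := by
    rw [div_le_iff₀ (exp_pos 1)]
    linarith [exp_one_gt_d9]
  have htaylor := exp_bound' (x := 0.368) (by norm_num) (by norm_num) (n := 5) (by norm_num)
  norm_num [Finset.sum_range_succ, Nat.factorial] at htaylor
  linarith [exp_le_exp.mpr hinv]

theorem log_le_five_sixths_mul_sqrt {x : ℝ} (hx : 576 ≤ x) : log x ≤ 5 / 6 * √x := by
  set s := √x
  have hs : 24 ≤ s := by
    rw [show (24:ℝ) = √576 by rw [show (576:ℝ) = 24 ^ 2 by norm_num, sqrt_sq (by norm_num)]]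
    exact sqrt_le_sqrt hx
  have hss : √s * √s = s := mul_self_sqrt (by linarith)
  have hlog : log x = 4 * log √s := by
    rw [log_sqrt (by linarith), log_sqrt (by linarith)]; ring
  have hsqrt : log √s ≤ √s - 1 := log_le_sub_one_of_pos (sqrt_pos.mpr (by linarith))
  nlinarith [sqrt_nonneg s]

theorem exp_neg_le_of_le {a b : ℝ} (h : 1 / b ≤ exp a) (hb : 0 < b) : exp (-a) ≤ b := by
  rw [exp_neg]
  exact inv_le_of_inv_le₀ hb (by simpa using h)

theorem exp_neg_succ_le {n m : ℕ} (hn : 594 ≤ n) (hm : (m : ℝ) ≤ 0.44491 * n + 1.05 * log n) :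
    exp (-((n : ℝ) + 1)) ≤ exp (-√n) * (0.31 ^ m * 0.69 ^ (n + 1)) := by
  have hnR : (594 : ℝ) ≤ n := by exact_mod_cast hn
  have h31 : exp (-(59 / 50)) ≤ 0.31 := by
    refine exp_neg_le_of_le ?_ (by norm_num)
    have : exp (59 / 50) = exp 1 * exp (9 / 50) := by rw [← exp_add]; norm_num
    nlinarith [quadratic_le_exp_of_nonneg (show (0:ℝ) ≤ 9 / 50 by norm_num), exp_one_gt_d9]
  have h69 : exp (-(77 / 200)) ≤ 0.69 :=
    exp_neg_le_of_le
      (by nlinarith [quadratic_le_exp_of_nonneg (show (0:ℝ) ≤ 77 / 200 by norm_num)]) (by norm_num)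
  have hs : √(n : ℝ) * √n = n := mul_self_sqrt (by positivity)
  have hs24 : 24 ≤ √(n : ℝ) := by nlinarith [sqrt_nonneg (n : ℝ)]
  have hlog := log_le_five_sixths_mul_sqrt (x := n) (by linarith)
  calc exp (-((n : ℝ) + 1))
      ≤ exp (-√n + m * (-(59 / 50)) + ((n + 1 : ℕ) : ℝ) * (-(77 / 200))) :=
        exp_le_exp.mpr (by push_cast; nlinarith)
    _ = exp (-√n) * (exp (-(59 / 50)) ^ m * exp (-(77 / 200)) ^ (n + 1)) := by
        rw [exp_add, exp_add, exp_nat_mul, exp_nat_mul, mul_assoc]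
    _ ≤ exp (-√n) * (0.31 ^ m * 0.69 ^ (n + 1)) := by gcongr

theorem sum_choose_mul_neg_one_pow_mul_one_sub_exp (n m : ℕ) :
    ∑ j ∈ range (m + 1), (m.choose j : ℝ) * (-1) ^ j *
        (1 - exp (-((n : ℝ) + j + 1))) / ((n : ℝ) + j + 1) ^ 2
      = ∑ j ∈ range (m + 1), (m.choose j : ℝ) * (-1) ^ j / ((n : ℝ) + j + 1) ^ 2
        - exp (-((n : ℝ) + 1)) *
          ∑ j ∈ range (m + 1), (m.choose j : ℝ) * (-exp (-1)) ^ j / ((n : ℝ) + j + 1) ^ 2 := by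
  rw [mul_sum, ← sum_sub_distrib]
  refine sum_congr rfl fun j _ => ?_
  have hexp : exp (-((n : ℝ) + j + 1)) = exp (-((n : ℝ) + 1)) * exp (-1) ^ j := by
    rw [← exp_nat_mul, ← exp_add]
    ring_nf
  rw [hexp, neg_pow (exp (-1))]
  ring

/-- alternating-sum positivity with exponential weights: for `n ≥ 594`
and `t = ⌈(e^{1/e}-1)·n + 1.05·ln n⌉`,
`Σ_j C(t-1,j)·(-1)^j·(1-e^{-(n+j+1)})/(n+j+1)² ≥ (1-e^{-√n})·Σ_j C(t-1,j)·(-1)^j/(n+j+1)²`. -/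
theorem stmt19 (n : ℕ) (hn : 594 ≤ n)
    (t : ℕ) (ht : t = ⌈(Real.exp (1 / Real.exp 1) - 1) * (n : ℝ) + 1.05 * Real.log (n : ℝ)⌉₊) :
    (1 - Real.exp (-Real.sqrt (n : ℝ))) *
        ∑ j ∈ Finset.range t, ((t - 1).choose j : ℝ) * (-1) ^ j / ((n : ℝ) + j + 1) ^ 2
      ≤ ∑ j ∈ Finset.range t, ((t - 1).choose j : ℝ) * (-1) ^ j *
          (1 - Real.exp (-((n : ℝ) + j + 1))) / ((n : ℝ) + j + 1) ^ 2 := by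
  obtain _ | m := t
  · simp
  have hm : (m : ℝ) ≤ 0.44491 * n + 1.05 * log n := by
    have hlt := Nat.lt_ceil.mp (ht ▸ Nat.lt_add_one m)
    nlinarith [exp_inv_exp_one_le, (Nat.cast_nonneg n : (0 : ℝ) ≤ n)]
  have hS : ∑ j ∈ range (m + 1), (m.choose j : ℝ) * (-1) ^ j / ((n : ℝ) + j + 1) ^ 2
      = squareMulIntegral 1 (fun u => u ^ n * (1 - u) ^ m) := by
    simpa using sum_choose_mul_neg_pow_div_sq_eq n m 1
  rw [Nat.add_sub_cancel, sum_choose_mul_neg_one_pow_mul_one_sub_exp,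
    sum_choose_mul_neg_pow_div_sq_eq n m (exp (-1)), hS]
  suffices exp (-((n : ℝ) + 1)) * squareMulIntegral 1 (fun u => u ^ n * (1 - exp (-1) * u) ^ m)
      ≤ exp (-√n) * squareMulIntegral 1 (fun u => u ^ n * (1 - u) ^ m) by linarith
  calc exp (-((n : ℝ) + 1)) * squareMulIntegral 1 (fun u => u ^ n * (1 - exp (-1) * u) ^ m)
      ≤ exp (-((n : ℝ) + 1)) * (1 / ((n : ℝ) + 1) ^ 2) := by
        gcongr
        exact squareMulIntegral_pow_mul_one_sub_pow_le n m (exp_pos _).le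
          (exp_le_one_iff.mpr (by norm_num))
    _ ≤ exp (-√n) * (0.31 ^ m * 0.69 ^ (n + 1)) * (1 / ((n : ℝ) + 1) ^ 2) := by
        gcongr
        exact exp_neg_succ_le hn hm
    _ = exp (-√n) * ((1 - 0.69) ^ m * 0.69 ^ (n + 1) / ((n : ℝ) + 1) ^ 2) := by
        norm_num; ring
    _ ≤ exp (-√n) * squareMulIntegral 1 (fun u => u ^ n * (1 - u) ^ m) := by
        gcongr
        exact le_squareMulIntegral_pow_mul_one_sub_pow n m (by norm_num) (by norm_num)
end
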